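/- arXiv:math/0412041 — 2 statements merged into one kernel-verified Lean document; each statement's English description precedes it below -/
import Mathlib

section
/- The large Schröder numbers are the unique sequence (a_k)_{k≥0} of real numbers whose Hankel determinants satisfy det[a_{i+j-2}]_{1≤i,j≤n} = 2^{n(n-1)/2} and det[a_{i+j-1}]_{1≤i,j≤n} = 2^{n(n+1)/2} for all n ≥ 1. -/
open Matrix

/-- A lattice point in the plane. -/
abbrev Pt := ℤ × ℤ

/-- The points visited by a path starting at `p` taking steps `l`. -/
def pts (p : Pt) (l : List Pt) : List Pt := l.scanl (· + ·) p

/-- The endpoint of a path starting at `p` taking steps `l`. -/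
def endpt (p : Pt) (l : List Pt) : Pt := l.foldl (· + ·) p

/-- `l` is the step list of a large Schröder path from `p` to `q`:
steps are U=(1,1), D=(1,-1), L=(2,0) and the path never goes below the x-axis. -/
def IsLargePath (p q : Pt) (l : List Pt) : Prop :=
  (∀ s ∈ l, s = (1, 1) ∨ s = (1, -1) ∨ s = (2, 0)) ∧
  (∀ v ∈ pts p l, 0 ≤ v.2) ∧
  endpt p l = q

/-- A small Schröder path: a large Schröder path with no level step on the x-axis. -/
def IsSmallPath (p q : Pt) (l : List Pt) : Prop :=
  IsLargePath p q l ∧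
  ∀ (i : ℕ) (h : i < l.length), l.get ⟨i, h⟩ = (2, 0) → (endpt p (l.take i)).2 ≠ 0

/-- The `k`-th large Schröder number: the number of large Schröder paths
from `(0,0)` to `(2k,0)`. -/
noncomputable def schR (k : ℕ) : ℕ := Nat.card {l : List Pt // IsLargePath (0, 0) (2 * k, 0) l}

/-- The `k`-th small Schröder number: the number of small Schröder paths
from `(0,0)` to `(2k,0)`. -/
noncomputable def schS (k : ℕ) : ℕ := Nat.card {l : List Pt // IsSmallPath (0, 0) (2 * k, 0) l}

/-- `Π n`: `n`-tuples of pairwise non-intersecting large Schröder paths where the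
`i`-th path (1-indexed; here index `i : Fin n` stands for `i+1`) runs from
`(-2(i+1)+1, 0)` to `(2(i+1)-1, 0)`. -/
def PiSet (n : ℕ) : Set (Fin n → List Pt) :=
  {π | (∀ i : Fin n, IsLargePath (-(2 * (i : ℤ) + 1), 0) (2 * (i : ℤ) + 1, 0) (π i)) ∧
    ∀ i j : Fin n, i ≠ j → ∀ v ∈ pts (-(2 * (i : ℤ) + 1), 0) (π i),
      v ∉ pts (-(2 * (j : ℤ) + 1), 0) (π j)}

/-- `Ω n`: the analogous tuples of small Schröder paths. -/
def OmegaSet (n : ℕ) : Set (Fin n → List Pt) :=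
  {ω | (∀ i : Fin n, IsSmallPath (-(2 * (i : ℤ) + 1), 0) (2 * (i : ℤ) + 1, 0) (ω i)) ∧
    ∀ i j : Fin n, i ≠ j → ∀ v ∈ pts (-(2 * (i : ℤ) + 1), 0) (ω i),
      v ∉ pts (-(2 * (j : ℤ) + 1), 0) (ω j)}

/-- `Π* n`: `n`-tuples `(μ₀,…,μ_{n-1})` of pairwise non-intersecting large Schröder
paths with `μ i` from `(-2i,0)` to `(2i,0)`. -/
def PiStarSet (n : ℕ) : Set (Fin n → List Pt) :=
  {μ | (∀ i : Fin n, IsLargePath (-(2 * (i : ℤ)), 0) (2 * (i : ℤ), 0) (μ i)) ∧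
    ∀ i j : Fin n, i ≠ j → ∀ v ∈ pts (-(2 * (i : ℤ)), 0) (μ i),
      v ∉ pts (-(2 * (j : ℤ)), 0) (μ j)}

/-- `Ω* n`: the analogous tuples of small Schröder paths. -/
def OmegaStarSet (n : ℕ) : Set (Fin n → List Pt) :=
  {μ | (∀ i : Fin n, IsSmallPath (-(2 * (i : ℤ)), 0) (2 * (i : ℤ), 0) (μ i)) ∧
    ∀ i j : Fin n, i ≠ j → ∀ v ∈ pts (-(2 * (i : ℤ)), 0) (μ i),
      v ∉ pts (-(2 * (j : ℤ)), 0) (μ j)}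

/-- The unit square with lower-left corner `c` lies in the Aztec diamond `Az(n)`,
i.e. all four of its corners `(x,y)` satisfy `|x| + |y| ≤ n + 1`. -/
def aztecCell (n : ℕ) (c : Pt) : Prop :=
  |c.1| + |c.2| ≤ (n : ℤ) + 1 ∧ |c.1 + 1| + |c.2| ≤ (n : ℤ) + 1 ∧
  |c.1| + |c.2 + 1| ≤ (n : ℤ) + 1 ∧ |c.1 + 1| + |c.2 + 1| ≤ (n : ℤ) + 1

/-- Two unit squares (given by lower-left corners) are edge-adjacent,
so together they form a 1×2 or 2×1 domino. -/
def adjCell (c d : Pt) : Prop :=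
  d = (c.1 + 1, c.2) ∨ d = (c.1 - 1, c.2) ∨ d = (c.1, c.2 + 1) ∨ d = (c.1, c.2 - 1)

/-- A domino tiling of `Az(n)`, encoded as the involution matching each cell of the
diamond with the other cell of its domino (and fixing everything outside). -/
def IsAztecTiling (n : ℕ) (m : Pt → Pt) : Prop :=
  (∀ c, aztecCell n c → aztecCell n (m c) ∧ adjCell c (m c) ∧ m (m c) = c) ∧
  ∀ c, ¬ aztecCell n c → m c = c

/-- The number of domino tilings of the Aztec diamond of order `n`. -/
noncomputable def aztecTilingCount (n : ℕ) : ℕ := Nat.card {m : Pt → Pt // IsAztecTiling n m}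

/-- The map sending `(π₁,…,π_{n-1})` to `(μ₀,…,μ_{n-1})` with `μ₀` the empty path
at the origin and `μᵢ = U πᵢ D`. -/
def extendStar {n : ℕ} (π : Fin (n - 1) → List Pt) (i : Fin n) : List Pt :=
  if h : (i : ℕ) = 0 then []
  else (1, 1) :: π ⟨(i : ℕ) - 1, by omega⟩ ++ [(1, -1)]


/-!
Let `R = 1 + x R + x R²`. Sorting lattice paths by their last step shows that `[x^m] R^(y+1)`
large Schröder paths end at `(2m + y, y)`, so `R` generates the large Schröder numbers.
Put `R = 1 + 2 x U`. Then `R` and `U` are the moment series of the stationary J-fractions with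
down weights `2` and level weights `2, 3, 3, …` resp. `3, 3, …`. For such a J-fraction the
weights `2^k` make the three-term recurrence of the weighted Motzkin triangle `F` symmetric,
which gives `H_n = F · diag(2^k) · Fᵀ` with `F` unitriangular, so `det H_n = 2^(n(n-1)/2)`;
the shifted Hankel matrix of `R` is `2` times the Hankel matrix of `U`.
Conversely, once the entries below `2n` are fixed, `det H_(n+1)` is affine in the corner entry
`a (2n)` with slope `det H_n ≠ 0`, and likewise for the shifted determinants and the odd entries.
-/

open Finset PowerSeries

def hankel {K : Type*} (a : ℕ → K) (n : ℕ) : Matrix (Fin n) (Fin n) K :=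
  Matrix.of fun i j => a (i + j)

section JacobiTriangle

variable {K : Type*} [CommRing K]

theorem det_mul_diagonal_mul_transpose_of_unitriangular {m : Type*} [Fintype m] [DecidableEq m]
    [LinearOrder m] (L : Matrix m m K) (hL : L.IsLowerTriangular) (hdiag : ∀ i, L i i = 1)
    (d : m → K) :
    (L * Matrix.diagonal d * L.transpose).det = ∏ i, d i := by
  have hLdet : L.det = 1 := by
    rw [Matrix.det_of_isLowerTriangular L hL]
    exact prod_eq_one fun i _ => hdiag i
  rw [Matrix.det_mul, Matrix.det_mul, Matrix.det_transpose, hLdet, Matrix.det_diagonal, one_mul,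
    mul_one]

/-- `f i k` is the weighted number of Motzkin paths of length `i` from height `0` to height `k`,
where up steps have weight `1`, level steps at height `k` weight `b k` and down steps from
height `k + 1` weight `l k`. -/
structure IsJacobiTriangle (b l : ℕ → K) (f : ℕ → ℕ → K) : Prop where
  eq_zero_of_lt {i k : ℕ} : i < k → f i k = 0
  diag (i : ℕ) : f i i = 1
  succ_zero (i : ℕ) : f (i + 1) 0 = b 0 * f i 0 + l 0 * f i 1
  succ_succ (i k : ℕ) :
    f (i + 1) (k + 1) = f i k + b (k + 1) * f i (k + 1) + l (k + 1) * f i (k + 2)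

def jacobiWeight (l : ℕ → K) (k : ℕ) : K := ∏ j ∈ range k, l j

theorem jacobiWeight_zero (l : ℕ → K) : jacobiWeight l 0 = 1 := prod_range_zero l

theorem jacobiWeight_succ (l : ℕ → K) (k : ℕ) :
    jacobiWeight l (k + 1) = jacobiWeight l k * l k :=
  prod_range_succ l k

namespace IsJacobiTriangle

variable {b l : ℕ → K} {f : ℕ → ℕ → K}

theorem succ_apply (hf : IsJacobiTriangle b l f) (i k : ℕ) :
    f (i + 1) k = (if k = 0 then 0 else f i (k - 1)) + b k * f i k + l k * f i (k + 1) := by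
  rcases k with _ | k
  · simp [hf.succ_zero]
  · simp [hf.succ_succ]

theorem sum_succ_left (hf : IsJacobiTriangle b l f) {N : ℕ} (i : ℕ) {j : ℕ} (hj : j < N) :
    ∑ k ∈ range N, f (i + 1) k * jacobiWeight l k * f j k =
      ∑ k ∈ range N, (b k * jacobiWeight l k * f i k * f j k +
        jacobiWeight l (k + 1) * (f i k * f j (k + 1) + f i (k + 1) * f j k)) := by
  obtain ⟨M, rfl⟩ : ∃ M, N = M + 1 := ⟨N - 1, by omega⟩
  have hshift :
      ∑ k ∈ range (M + 1), (if k = 0 then 0 else f i (k - 1)) * jacobiWeight l k * f j k =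
        ∑ k ∈ range (M + 1), f i k * jacobiWeight l (k + 1) * f j (k + 1) := by
    rw [sum_range_succ', sum_range_succ, hf.eq_zero_of_lt hj]
    simp
  simp only [hf.succ_apply, add_mul, sum_add_distrib]
  rw [hshift, ← sum_add_distrib, ← sum_add_distrib, ← sum_add_distrib]
  exact sum_congr rfl fun k _ => by rw [jacobiWeight_succ]; ring

theorem sum_succ_left_eq_sum_succ_right (hf : IsJacobiTriangle b l f) {N i j : ℕ} (hi : i < N)
    (hj : j < N) :
    ∑ k ∈ range N, f (i + 1) k * jacobiWeight l k * f j k =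
      ∑ k ∈ range N, f i k * jacobiWeight l k * f (j + 1) k := by
  have hswap : ∑ k ∈ range N, f i k * jacobiWeight l k * f (j + 1) k =
      ∑ k ∈ range N, f (j + 1) k * jacobiWeight l k * f i k :=
    sum_congr rfl fun k _ => by ring
  rw [hf.sum_succ_left i hj, hswap, hf.sum_succ_left j hi]
  exact sum_congr rfl fun k _ => by ring

theorem sum_mul_jacobiWeight_mul (hf : IsJacobiTriangle b l f) {N i j : ℕ} (hN : i + j < N) :
    ∑ k ∈ range N, f i k * jacobiWeight l k * f j k = f (i + j) 0 := by
  induction j generalizing i with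
  | zero =>
    rw [sum_eq_single_of_mem 0 (mem_range.2 (by omega)) fun k _ hk =>
      by rw [hf.eq_zero_of_lt (Nat.pos_of_ne_zero hk), mul_zero]]
    rw [hf.diag, jacobiWeight_zero, mul_one, mul_one, add_zero]
  | succ j ih =>
    rw [← hf.sum_succ_left_eq_sum_succ_right (by omega) (by omega), ih (by omega),
      Nat.add_right_comm, Nat.add_assoc]

theorem hankel_eq_mul_diagonal_mul_transpose (hf : IsJacobiTriangle b l f) (n : ℕ) :
    hankel (fun m => f m 0) n = Matrix.of (fun i k : Fin n => f i k) *
      Matrix.diagonal (fun k : Fin n => jacobiWeight l k) *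
      (Matrix.of (fun i k : Fin n => f i k)).transpose := by
  ext i j
  have hsub : ∑ k ∈ range n, f i k * jacobiWeight l k * f j k =
      ∑ k ∈ range (i + j + n + 1), f i k * jacobiWeight l k * f j k := by
    refine sum_subset (range_subset_range.2 (by omega)) fun k _ hk => ?_
    rw [hf.eq_zero_of_lt (by simp at hk; omega), zero_mul, zero_mul]
  rw [Matrix.mul_apply]
  simp only [Matrix.mul_diagonal, Matrix.transpose_apply, Matrix.of_apply, hankel]
  rw [Fin.sum_univ_eq_sum_range (fun k => f i k * jacobiWeight l k * f j k), hsub,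
    hf.sum_mul_jacobiWeight_mul (by omega)]

theorem det_hankel (hf : IsJacobiTriangle b l f) (n : ℕ) :
    (hankel (fun m => f m 0) n).det = ∏ k ∈ range n, jacobiWeight l k := by
  rw [hf.hankel_eq_mul_diagonal_mul_transpose,
    det_mul_diagonal_mul_transpose_of_unitriangular (.of fun i k : Fin n => f i k)
      (fun i k (hik : i < k) => hf.eq_zero_of_lt hik) (fun i => hf.diag i),
    Fin.prod_univ_eq_prod_range (jacobiWeight l)]

end IsJacobiTriangle

end JacobiTriangle

section StationaryJFraction

variable {K : Type*} [CommRing K] {b₀ b l : K} {R T : K⟦X⟧}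

/-- `R` is the J-fraction `1 / (1 - b₀ x - l x² / (1 - b x - l x² / …))` and `T = x C`, where
`C = 1 / (1 - b x - l x² C)` is its tail; `R * T ^ k` generates column `k` of the triangle. -/
theorem isJacobiTriangle_coeff_mul_pow (hR : R = 1 + X * R * (C b₀ + C l * T))
    (hT : T = X * (1 + C b * T + C l * T ^ 2)) :
    IsJacobiTriangle (fun k => if k = 0 then b₀ else b) (fun _ => l)
      (fun i k => coeff i (R * T ^ k)) := by
  have hT0 : constantCoeff T = 0 := by rw [hT]; simp
  have hR0 : constantCoeff R = 1 := by rw [hR]; simp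
  have hcoeff : ∀ i k, coeff i (R * T ^ k) =
      if k ≤ i then coeff (i - k) (R * (1 + C b * T + C l * T ^ 2) ^ k) else 0 := by
    intro i k
    rw [← coeff_X_pow_mul']
    conv_lhs => rw [hT, mul_pow, mul_left_comm]
  refine ⟨fun {i k} hik => ?_, fun i => ?_, fun i => ?_, fun i k => ?_⟩
  · simp [hcoeff, Nat.not_le.2 hik]
  · simp [hcoeff, hR0, hT0]
  · have h : R = 1 + X * (C b₀ * R + C l * (R * T)) := by
      linear_combination hR
    simp only [pow_zero, mul_one, pow_one, ↓reduceIte]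
    conv_lhs => rw [h]
    rw [map_add, coeff_one, if_neg i.succ_ne_zero, zero_add, coeff_succ_X_mul, map_add,
      coeff_C_mul, coeff_C_mul]
  · have h : R * T ^ (k + 1) =
        X * (R * T ^ k + C b * (R * T ^ (k + 1)) + C l * (R * T ^ (k + 2))) := by
      linear_combination (R * T ^ k) * hT
    conv_lhs => rw [h]
    simp only [coeff_succ_X_mul, map_add, coeff_C_mul, k.succ_ne_zero, ↓reduceIte]

theorem det_hankel_coeff_of_jFraction (hR : R = 1 + X * R * (C b₀ + C l * T))
    (hT : T = X * (1 + C b * T + C l * T ^ 2)) (n : ℕ) :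
    (hankel (fun m => coeff m R) n).det = l ^ (n * (n - 1) / 2) := by
  have h := (isJacobiTriangle_coeff_mul_pow hR hT).det_hankel n
  simp only [pow_zero, mul_one] at h
  rw [h, ← sum_range_id, ← prod_pow_eq_pow_sum]
  exact prod_congr rfl fun k _ => by simp [jacobiWeight]

end StationaryJFraction

section Uniqueness

variable {K : Type*} [CommRing K]

theorem det_sub_det_eq_of_eq_of_ne_last {n : ℕ} {M M' : Matrix (Fin (n + 1)) (Fin (n + 1)) K}
    (h : ∀ i j, i ≠ Fin.last n ∨ j ≠ Fin.last n → M i j = M' i j) :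
    M.det - M'.det =
      (M (Fin.last n) (Fin.last n) - M' (Fin.last n) (Fin.last n)) *
        (M'.submatrix Fin.castSucc Fin.castSucc).det := by
  have hminor : ∀ j : Fin (n + 1), M.submatrix (Fin.last n).succAbove j.succAbove =
      M'.submatrix (Fin.last n).succAbove j.succAbove := fun j => by
    ext i k
    exact h _ _ (.inl (by rw [Fin.succAbove_last]; exact (Fin.castSucc_lt_last i).ne))
  rw [M.det_succ_row (Fin.last n), M'.det_succ_row (Fin.last n), ← sum_sub_distrib,
    sum_eq_single (Fin.last n)]
  · rw [hminor, Fin.succAbove_last, ← two_mul, pow_mul, neg_one_sq, one_pow]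
    ring
  · intro j _ hj
    rw [hminor, h _ _ (.inr hj), sub_self]
  · simp

variable [NoZeroDivisors K]

theorem eq_of_det_hankel_succ_eq {a a' : ℕ → K} {n : ℕ} (hlt : ∀ m < 2 * n, a m = a' m)
    (hdet : (hankel a (n + 1)).det = (hankel a' (n + 1)).det) (hne : (hankel a' n).det ≠ 0) :
    a (2 * n) = a' (2 * n) := by
  have h := det_sub_det_eq_of_eq_of_ne_last (M := hankel a (n + 1)) (M' := hankel a' (n + 1))
    fun i j hij => hlt _ (by
      rw [Ne, Fin.ext_iff, Ne, Fin.ext_iff, Fin.val_last] at hij; omega)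
  rw [hdet, sub_self] at h
  have hcorner := (mul_eq_zero.1 h.symm).resolve_right hne
  simpa [hankel, two_mul, sub_eq_zero] using hcorner

theorem eq_of_det_hankel_eq {a a' : ℕ → K}
    (h₀ : ∀ n, (hankel a n).det = (hankel a' n).det)
    (h₁ : ∀ n, (hankel (fun k => a (k + 1)) n).det = (hankel (fun k => a' (k + 1)) n).det)
    (h₀' : ∀ n, (hankel a' n).det ≠ 0)
    (h₁' : ∀ n, (hankel (fun k => a' (k + 1)) n).det ≠ 0) :
    a = a' := by
  funext k
  induction k using Nat.strong_induction_on with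
  | _ k ih =>
    obtain ⟨n, rfl | rfl⟩ := Nat.even_or_odd' k
    · exact eq_of_det_hankel_succ_eq ih (h₀ (n + 1)) (h₀' n)
    · exact eq_of_det_hankel_succ_eq (a := fun k => a (k + 1)) (a' := fun k => a' (k + 1))
        (fun m hm => ih (m + 1) (by omega)) (h₁ (n + 1)) (h₁' n)

end Uniqueness

section LargeSchroederPaths

theorem endpt_append_singleton (p : Pt) (l : List Pt) (s : Pt) :
    endpt p (l ++ [s]) = endpt p l + s :=
  List.foldl_concat _ _ _ _

theorem pts_append_singleton (p : Pt) (l : List Pt) (s : Pt) :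
    pts p (l ++ [s]) = pts p l ++ [endpt p l + s] := by
  simp [pts, endpt, List.scanl_append]

theorem isLargePath_nil_iff {p q : Pt} : IsLargePath p q [] ↔ 0 ≤ p.2 ∧ p = q := by
  simp [IsLargePath, pts, endpt]

theorem isLargePath_append_singleton_iff {p q s : Pt} {l : List Pt} :
    IsLargePath p q (l ++ [s]) ↔
      (s = (1, 1) ∨ s = (1, -1) ∨ s = (2, 0)) ∧ 0 ≤ q.2 ∧ IsLargePath p (q - s) l := by
  simp only [IsLargePath, pts_append_singleton, endpt_append_singleton, List.mem_append,
    List.mem_singleton, eq_sub_iff_add_eq]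
  constructor
  · rintro ⟨hsteps, hpts, rfl⟩
    exact ⟨hsteps s (by simp), hpts _ (by simp), fun t ht => hsteps t (by simp [ht]),
      fun v hv => hpts v (by simp [hv]), rfl⟩
  · rintro ⟨hs, hq, hsteps, hpts, rfl⟩
    refine ⟨fun t ht => ?_, fun v hv => ?_, rfl⟩
    · rcases ht with ht | rfl
      exacts [hsteps t ht, hs]
    · rcases hv with hv | rfl
      exacts [hpts v hv, hq]

theorem IsLargePath.length_le {p q : Pt} {l : List Pt} (h : IsLargePath p q l) :
    (l.length : ℤ) ≤ q.1 - p.1 := by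
  induction l using List.reverseRecOn generalizing q with
  | nil => simp [← (isLargePath_nil_iff.1 h).2]
  | append_singleton l s ih =>
    obtain ⟨hs, -, hl⟩ := isLargePath_append_singleton_iff.1 h
    have := ih hl
    rcases hs with rfl | rfl | rfl <;> simp at this ⊢ <;> omega

theorem IsLargePath.snd_sub_le {p q : Pt} {l : List Pt} (h : IsLargePath p q l) :
    q.2 - p.2 ≤ q.1 - p.1 := by
  induction l using List.reverseRecOn generalizing q with
  | nil => simp [← (isLargePath_nil_iff.1 h).2]
  | append_singleton l s ih =>
    obtain ⟨hs, -, hl⟩ := isLargePath_append_singleton_iff.1 h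
    have := ih hl
    rcases hs with rfl | rfl | rfl <;> simp at this ⊢ <;> omega

theorem IsLargePath.zero_le_snd {p q : Pt} {l : List Pt} (h : IsLargePath p q l) : 0 ≤ q.2 := by
  rcases List.eq_nil_or_concat' l with rfl | ⟨l, s, rfl⟩
  · obtain ⟨hp, rfl⟩ := isLargePath_nil_iff.1 h
    exact hp
  · exact (isLargePath_append_singleton_iff.1 h).2.1

instance finite_isLargePath (q : Pt) : Finite {l : List Pt // IsLargePath (0, 0) q l} := by
  let S : Set Pt := {(1, 1), (1, -1), (2, 0)}
  refine Set.Finite.to_subtype <|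
    ((List.finite_length_le S q.1.toNat).image (List.map Subtype.val)).subset fun l hl => ?_
  lift l to List S using hl.1
  have := IsLargePath.length_le hl
  simp only [List.length_map, sub_zero] at this
  exact ⟨l, show l.length ≤ q.1.toNat by omega, rfl⟩

noncomputable def largePathCount (q : Pt) : ℕ := Nat.card {l : List Pt // IsLargePath (0, 0) q l}

theorem largePathCount_eq_zero {q : Pt} (hq : q.2 < 0 ∨ q.1 < q.2) : largePathCount q = 0 :=
  have : IsEmpty {l : List Pt // IsLargePath (0, 0) q l} := ⟨fun l => by
    have := l.2.zero_le_snd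
    have := l.2.snd_sub_le
    simp only [sub_zero] at this
    omega⟩
  Nat.card_of_isEmpty

theorem largePathCount_zero : largePathCount (0, 0) = 1 := by
  refine Nat.card_eq_one_iff_unique.2
    ⟨⟨fun l l' => Subtype.ext ?_⟩, ⟨⟨[], by simp [isLargePath_nil_iff]⟩⟩⟩
  have hnil : ∀ l : {l : List Pt // IsLargePath (0, 0) (0, 0) l}, l.1 = [] := fun l => by
    simpa using l.2.length_le
  rw [hnil, hnil]

theorem largePathCount_eq_add {q : Pt} (hq : 0 ≤ q.2) (hq₀ : q ≠ (0, 0)) :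
    largePathCount q = largePathCount (q - (1, 1)) + largePathCount (q - (1, -1)) +
      largePathCount (q - (2, 0)) := by
  let append (s : Pt) (hs : s = (1, 1) ∨ s = (1, -1) ∨ s = (2, 0))
      (l : {l // IsLargePath (0, 0) (q - s) l}) : {l // IsLargePath (0, 0) q l} :=
    ⟨l.1 ++ [s], isLargePath_append_singleton_iff.2 ⟨hs, hq, l.2⟩⟩
  let appendStep :=
    Sum.elim (Sum.elim (append (1, 1) (by simp)) (append (1, -1) (by simp)))
      (append (2, 0) (by simp))
  have hinj : Function.Injective appendStep := by
    rintro ((l | l) | l) ((l' | l') | l') h <;>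
      simp [appendStep, append] at h ⊢ <;> exact Subtype.ext h
  have hsurj : Function.Surjective appendStep := by
    rintro ⟨l, hl⟩
    rcases List.eq_nil_or_concat' l with rfl | ⟨l, s, rfl⟩
    · exact absurd (isLargePath_nil_iff.1 hl).2.symm hq₀
    obtain ⟨hs, -, hl⟩ := isLargePath_append_singleton_iff.1 hl
    rcases hs with rfl | rfl | rfl
    exacts [⟨.inl (.inl ⟨l, hl⟩), rfl⟩, ⟨.inl (.inr ⟨l, hl⟩), rfl⟩,
      ⟨.inr ⟨l, hl⟩, rfl⟩]
  rw [largePathCount, ← Nat.card_eq_of_bijective appendStep ⟨hinj, hsurj⟩, Nat.card_sum,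
    Nat.card_sum]
  rfl

end LargeSchroederPaths

section LargeSchroederNumbers

def largeSchroeder : ℕ → ℕ
  | 0 => 1
  | n + 1 => largeSchroeder n + ∑ i : Fin (n + 1), largeSchroeder i * largeSchroeder (n - i)

def largeSchroederSeries : ℕ⟦X⟧ := mk largeSchroeder

theorem largeSchroederSeries_eq :
    largeSchroederSeries = 1 + X * largeSchroederSeries + X * largeSchroederSeries ^ 2 := by
  ext (_ | n)
  · simp [largeSchroederSeries, largeSchroeder]
  · rw [map_add, map_add, coeff_one, if_neg n.succ_ne_zero, zero_add, coeff_succ_X_mul,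
      coeff_succ_X_mul, sq, coeff_mul, largeSchroederSeries, coeff_mk, coeff_mk, largeSchroeder,
      Finset.Nat.sum_antidiagonal_eq_sum_range_succ_mk, ← Fin.sum_univ_eq_sum_range]
    simp

theorem coeff_largeSchroederSeries_pow_succ (m y : ℕ) :
    coeff (m + 1) (largeSchroederSeries ^ (y + 1)) = coeff (m + 1) (largeSchroederSeries ^ y) +
      coeff m (largeSchroederSeries ^ (y + 2)) + coeff m (largeSchroederSeries ^ (y + 1)) := by
  have h : largeSchroederSeries ^ (y + 1) = largeSchroederSeries ^ y +
      X * (largeSchroederSeries ^ (y + 2) + largeSchroederSeries ^ (y + 1)) := by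
    calc largeSchroederSeries ^ (y + 1) = largeSchroederSeries ^ y * largeSchroederSeries :=
          pow_succ _ _
      _ = _ := by nth_rw 2 [largeSchroederSeries_eq]; ring
  conv_lhs => rw [h]
  rw [map_add, coeff_succ_X_mul, map_add, add_assoc]

theorem constantCoeff_largeSchroederSeries : constantCoeff largeSchroederSeries = 1 := by
  simp [largeSchroederSeries, largeSchroeder, ← coeff_zero_eq_constantCoeff_apply]

theorem largePathCount_eq_coeff_pow (m y : ℕ) :
    largePathCount (2 * m + y, y) = coeff m (largeSchroederSeries ^ (y + 1)) := by
  induction m generalizing y with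
  | zero =>
    induction y with
    | zero => simp [largePathCount_zero, constantCoeff_largeSchroederSeries]
    | succ y ih =>
      rw [largePathCount_eq_add (by positivity) (by simp; omega),
        largePathCount_eq_zero (q := (_, _) - (1, -1)) (by simp),
        largePathCount_eq_zero (q := (_, _) - (2, 0)) (by simp)]
      simpa [constantCoeff_largeSchroederSeries] using ih
  | succ m ihm =>
    induction y with
    | zero =>
      rw [largePathCount_eq_add le_rfl (by simp; omega), largePathCount_eq_zero (by simp),
        zero_add, coeff_largeSchroederSeries_pow_succ, ← ihm, ← ihm, pow_zero, coeff_one,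
        if_neg m.succ_ne_zero, zero_add]
      congr 2 <;> ext <;> simp <;> ring
    | succ y ihy =>
      rw [largePathCount_eq_add (by positivity) (by simp; omega),
        coeff_largeSchroederSeries_pow_succ, ← ihm, ← ihm, ← ihy]
      congr 3 <;> ext <;> simp <;> ring

end LargeSchroederNumbers

section SchroederHankel

theorem schR_eq_largeSchroeder (k : ℕ) : schR k = largeSchroeder k := by
  show largePathCount (2 * k, 0) = _
  simpa [largeSchroederSeries] using largePathCount_eq_coeff_pow k 0

theorem det_hankel_largeSchroeder (n : ℕ) :
    (hankel (fun k => (largeSchroeder k : ℝ)) n).det = 2 ^ (n * (n - 1) / 2) ∧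
      (hankel (fun k => (largeSchroeder (k + 1) : ℝ)) n).det = 2 ^ (n * (n + 1) / 2) := by
  set R : ℝ⟦X⟧ := map (Nat.castRingHom ℝ) largeSchroederSeries
  have hcoeff : ∀ k, coeff k R = largeSchroeder k := by simp [R, largeSchroederSeries]
  have hR : R = 1 + X * R + X * R ^ 2 := by
    simpa [R] using congrArg (map (Nat.castRingHom ℝ)) largeSchroederSeries_eq
  -- `U` generates the small Schröder numbers `1, 3, 11, 45, …`
  set U : ℝ⟦X⟧ := mk fun k => coeff (k + 1) R / 2
  have hRU : R = 1 + X * (C 2 * U) := by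
    ext (_ | k)
    · simp [hcoeff, largeSchroeder]
    · rw [map_add, coeff_one, if_neg k.succ_ne_zero, zero_add, coeff_succ_X_mul, coeff_C_mul,
        coeff_mk, mul_div_cancel₀ _ two_ne_zero]
  rw [map_ofNat] at hRU
  have hR' : R = 1 + X * R * (C 2 + C 2 * (X * U)) := by
    rw [map_ofNat]
    linear_combination hR + X * R * hRU
  have hU : U = 1 + X * U * (C 3 + C 2 * (X * U)) := by
    have h2X : (2 * X : ℝ⟦X⟧) ≠ 0 :=
      mul_ne_zero (by exact_mod_cast (map_ne_zero C).2 two_ne_zero) X_ne_zero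
    apply mul_left_cancel₀ h2X
    rw [map_ofNat, map_ofNat]
    linear_combination hR + (2 * X + X * R + 2 * X ^ 2 * U - 1) * hRU
  have hT : X * U = X * (1 + C 3 * (X * U) + C 2 * (X * U) ^ 2) := by
    linear_combination X * hU
  constructor
  · simpa [hcoeff] using det_hankel_coeff_of_jFraction hR' hT n
  · have hshift : hankel (fun k => (largeSchroeder (k + 1) : ℝ)) n =
        (2 : ℝ) • hankel (fun k => coeff k U) n := by
      ext i j
      simp [hankel, U, hcoeff, mul_div_cancel₀]
    rw [hshift, Matrix.det_smul, det_hankel_coeff_of_jFraction hU hT n, Fintype.card_fin,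
      ← pow_add]
    have h := sum_range_succ (fun i => i) n
    rw [sum_range_id, sum_range_id, Nat.add_sub_cancel, mul_comm] at h
    rw [h, add_comm]

end SchroederHankel

/-- The large Schröder numbers are the unique real sequence whose Hankel
determinants are `det [a_{i+j-2}] = 2^{n(n-1)/2}` and `det [a_{i+j-1}] = 2^{n(n+1)/2}`
for all `n ≥ 1`. -/
theorem large_schroeder_hankel_characterization (a : ℕ → ℝ) :
    (∀ n : ℕ, 1 ≤ n →
        (Matrix.of fun i j : Fin n => a ((i : ℕ) + (j : ℕ))).det = 2 ^ (n * (n - 1) / 2) ∧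
        (Matrix.of fun i j : Fin n => a ((i : ℕ) + (j : ℕ) + 1)).det = 2 ^ (n * (n + 1) / 2)) ↔
      a = fun k => (schR k : ℝ) := by
  simp_rw [schR_eq_largeSchroeder]
  constructor
  · intro h
    refine eq_of_det_hankel_eq (fun n => ?_) (fun n => ?_) (fun n => ?_) (fun n => ?_)
    · rcases n with _ | n
      · simp
      exact (h (n + 1) n.succ_pos).1.trans (det_hankel_largeSchroeder (n + 1)).1.symm
    · rcases n with _ | n
      · simp
      exact (h (n + 1) n.succ_pos).2.trans (det_hankel_largeSchroeder (n + 1)).2.symm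
    · rw [(det_hankel_largeSchroeder n).1]
      positivity
    · rw [(det_hankel_largeSchroeder n).2]
      positivity
  · rintro rfl n -
    exact det_hankel_largeSchroeder n
end

section
/- For any sequence of real numbers, the determinant of the n×n matrix [a_{i+j-1}] whose (i,j)-entry counts weighted paths from source A_i to sink B_j equals the signed sum over permutations σ of products of path counts, and via the Lindström–Gessel–Viennot sign-reversing involution it equals the number of n-tuples of pairwise non-intersecting path systems connecting A_i to B_i; specialized to large Schröder paths with A_i = (-2i+1,0) and B_j = (2j-1,0), this gives det[r_{i+j-1}] = |Π_n|. -/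
open Matrix

/-!
Expanding the determinant, `∏ i, r (i + σ i + 1)` counts systems of large Schröder paths from
`A i = (-(2i+1), 0)` to `B (σ i) = (2 σ(i) + 1, 0)`. The Lindström–Gessel–Viennot involution takes
the least index `i` of a path meeting another one, the first vertex `v` of that path lying on
another path, and the least other path `j` through `v`, and exchanges the tails of paths `i` and
`j` after `v`. This preserves `i`, `v` and `j`, so it is an involution, and it multiplies `σ` by
the transposition `(i j)`, so the intersecting systems cancel in the signed sum. A
non-intersecting system has `σ = 1`: if `i < j` but `σ j < σ i`, the endpoints of paths `i` and
`j` interleave on the axis, and since all vertices have odd `x + y`, the difference of the two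
height functions cannot jump over zero from one column to the next, which yields a common vertex.
-/

lemma List.take_append_drop_take_append_drop {α : Type*} {l₁ l₂ : List α} {a b : ℕ}
    (ha : a ≤ l₁.length) (hb : b ≤ l₂.length) :
    (l₁.take a ++ l₂.drop b).take a ++ (l₂.take b ++ l₁.drop a).drop b = l₁ := by
  rw [List.take_left' (by simpa using ha), List.drop_left' (by simpa using hb),
    List.take_append_drop]

lemma List.getElem?_take_append {α : Type*} {l₁ l₂ : List α} {a i : ℕ} (hi : i < a)
    (ha : a ≤ l₁.length) : (l₁.take a ++ l₂)[i]? = l₁[i]? := by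
  rw [List.getElem?_append_left (by rw [List.length_take]; omega), List.getElem?_take, if_pos hi]

lemma Int.exists_eq_zero_of_pos_imp_succ_nonneg (g : ℤ → ℤ) {x₀ x₁ : ℤ} (hx : x₀ ≤ x₁)
    (h₀ : 0 ≤ g x₀) (h₁ : g x₁ ≤ 0) (hg : ∀ x, 0 < g x → 0 ≤ g (x + 1)) :
    ∃ x, x₀ ≤ x ∧ x ≤ x₁ ∧ g x = 0 := by
  obtain ⟨k, rfl⟩ : ∃ k : ℕ, x₁ = x₀ + k := ⟨(x₁ - x₀).toNat, by omega⟩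
  induction k with
  | zero => exact ⟨x₀, le_rfl, by simp, le_antisymm (by simpa using h₁) h₀⟩
  | succ k ih =>
    by_cases hk : g (x₀ + k) ≤ 0
    · obtain ⟨x, hx₀, hx₁, hx⟩ := ih (by omega) hk
      exact ⟨x, hx₀, by push_cast; omega, hx⟩
    · have := hg (x₀ + k) (by omega)
      rw [Nat.cast_succ, ← add_assoc] at h₁ ⊢
      exact ⟨x₀ + k + 1, by omega, le_rfl, by omega⟩

namespace LargeSchroder

def IsStep (s : Pt) : Prop := s = (1, 1) ∨ s = (1, -1) ∨ s = (2, 0)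

lemma IsStep.fst_snd {s : Pt} (hs : IsStep s) :
    (s.1 = 1 ∧ s.2 = 1) ∨ (s.1 = 1 ∧ s.2 = -1) ∨ (s.1 = 2 ∧ s.2 = 0) := by
  rcases hs with rfl | rfl | rfl <;> simp

@[simp] lemma pts_nil (p : Pt) : pts p [] = [p] := rfl

@[simp] lemma pts_cons (p s : Pt) (l : List Pt) : pts p (s :: l) = p :: pts (p + s) l := by
  simp only [pts, List.scanl_cons]

@[simp] lemma endpt_nil (p : Pt) : endpt p [] = p := rfl

@[simp] lemma endpt_cons (p s : Pt) (l : List Pt) : endpt p (s :: l) = endpt (p + s) l := rfl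

@[simp] lemma length_pts (p : Pt) (l : List Pt) : (pts p l).length = l.length + 1 :=
  List.length_scanl

lemma self_mem_pts (p : Pt) (l : List Pt) : p ∈ pts p l := by
  cases l <;> simp

lemma endpt_mem_pts (p : Pt) (l : List Pt) : endpt p l ∈ pts p l := by
  induction l generalizing p with
  | nil => simp
  | cons s l ih => simp [ih (p + s)]

lemma endpt_append (p : Pt) (l₁ l₂ : List Pt) :
    endpt p (l₁ ++ l₂) = endpt (endpt p l₁) l₂ :=
  List.foldl_append

lemma pts_append (p : Pt) (l₁ l₂ : List Pt) :
    pts p (l₁ ++ l₂) = pts p l₁ ++ (pts (endpt p l₁) l₂).tail := by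
  induction l₁ generalizing p with
  | nil => cases l₂ <;> simp
  | cons s l ih => simp [ih (p + s)]

lemma pts_take (p : Pt) (l : List Pt) (t : ℕ) :
    pts p (l.take t) = (pts p l).take (t + 1) := by
  induction l generalizing p t with
  | nil => simp
  | cons s l ih => cases t <;> simp [ih]

lemma pts_drop (p : Pt) (l : List Pt) {t : ℕ} (ht : t ≤ l.length) :
    pts (endpt p (l.take t)) (l.drop t) = (pts p l).drop t := by
  induction l generalizing p t with
  | nil =>
    obtain rfl : t = 0 := by simpa using ht
    simp
  | cons s l ih =>
    cases t with
    | zero => simp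
    | succ t => simpa using ih (p + s) (by simpa using ht)

lemma getElem_pts (p : Pt) (l : List Pt) {t : ℕ} (ht : t < (pts p l).length) :
    (pts p l)[t] = endpt p (l.take t) := by
  induction l generalizing p t with
  | nil =>
    obtain rfl : t = 0 := by simpa using ht
    simp
  | cons s l ih =>
    cases t with
    | zero => simp
    | succ t => simpa using ih (p + s) (by simpa using ht)

lemma pts_add (d p : Pt) (l : List Pt) : pts (d + p) l = (pts p l).map (d + ·) := by
  induction l generalizing p with
  | nil => simp
  | cons s l ih => simp [add_assoc, ih (p + s)]

lemma endpt_add (d p : Pt) (l : List Pt) : endpt (d + p) l = d + endpt p l := by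
  induction l generalizing p with
  | nil => simp
  | cons s l ih => simp [add_assoc, ih (p + s)]

lemma pts_splice {p₁ p₂ : Pt} (l₁ l₂ : List Pt) {t₁ t₂ : ℕ} (ht₂ : t₂ ≤ l₂.length)
    (hv : endpt p₁ (l₁.take t₁) = endpt p₂ (l₂.take t₂)) :
    pts p₁ (l₁.take t₁ ++ l₂.drop t₂) = (pts p₁ l₁).take (t₁ + 1) ++ (pts p₂ l₂).drop (t₂ + 1) := by
  rw [pts_append, pts_take, hv, pts_drop p₂ l₂ ht₂, List.tail_drop]

section Steps

variable {p : Pt} {l : List Pt}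

lemma fst_le_of_mem_pts (hl : ∀ s ∈ l, IsStep s) {v : Pt} (hv : v ∈ pts p l) : p.1 ≤ v.1 := by
  induction l generalizing p with
  | nil => simp_all
  | cons s l ih =>
    simp only [pts_cons, List.mem_cons] at hv
    rcases hv with rfl | hv
    · rfl
    · have := ih (fun t ht => hl t (List.mem_cons_of_mem _ ht)) hv
      have := (hl s List.mem_cons_self).fst_snd
      simp only [Prod.fst_add] at *
      omega

lemma nodup_pts (hl : ∀ s ∈ l, IsStep s) : (pts p l).Nodup := by
  induction l generalizing p with
  | nil => simp
  | cons s l ih =>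
    rw [pts_cons]
    refine List.nodup_cons.mpr ⟨fun hp => ?_, ih fun t ht => hl t (List.mem_cons_of_mem _ ht)⟩
    have := fst_le_of_mem_pts (fun t ht => hl t (List.mem_cons_of_mem _ ht)) hp
    have := (hl s List.mem_cons_self).fst_snd
    simp only [Prod.fst_add] at *
    omega

lemma parity_of_mem_pts (hl : ∀ s ∈ l, IsStep s) {v : Pt} (hv : v ∈ pts p l) :
    (v.1 + v.2) % 2 = (p.1 + p.2) % 2 := by
  induction l generalizing p with
  | nil => simp_all
  | cons s l ih =>
    simp only [pts_cons, List.mem_cons] at hv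
    rcases hv with rfl | hv
    · rfl
    · have := ih (fun t ht => hl t (List.mem_cons_of_mem _ ht)) hv
      have := (hl s List.mem_cons_self).fst_snd
      simp only [Prod.fst_add, Prod.snd_add] at *
      omega

lemma fst_add_length_le_endpt (hl : ∀ s ∈ l, IsStep s) : p.1 + l.length ≤ (endpt p l).1 := by
  induction l generalizing p with
  | nil => simp
  | cons s l ih =>
    have := ih (p := p + s) fun t ht => hl t (List.mem_cons_of_mem _ ht)
    have := (hl s List.mem_cons_self).fst_snd
    simp only [endpt_cons, List.length_cons, Prod.fst_add] at *
    omega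

end Steps

/-- Extended by constants before the start and after the end of the path; at the middle column
of a level step it is the height of that step. -/
def height : Pt → List Pt → ℤ → ℤ
  | p, [], _ => p.2
  | p, s :: l, x => if x < p.1 + s.1 then p.2 else height (p + s) l x

section Height

variable {p : Pt} {l : List Pt}

lemma height_cons (p s : Pt) (l : List Pt) (x : ℤ) :
    height p (s :: l) x = if x < p.1 + s.1 then p.2 else height (p + s) l x := rfl

lemma height_of_le (hl : ∀ s ∈ l, IsStep s) {x : ℤ} (hx : x ≤ p.1) : height p l x = p.2 := by
  cases l with
  | nil => rfl
  | cons s l =>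
    have := (hl s List.mem_cons_self).fst_snd
    rw [height_cons, if_pos (by omega)]

lemma height_of_endpt_le (hl : ∀ s ∈ l, IsStep s) {x : ℤ} (hx : (endpt p l).1 ≤ x) :
    height p l x = (endpt p l).2 := by
  induction l generalizing p with
  | nil => rfl
  | cons s l ih =>
    have hl' : ∀ t ∈ l, IsStep t := fun t ht => hl t (List.mem_cons_of_mem _ ht)
    have := fst_add_length_le_endpt (p := p + s) hl'
    rw [endpt_cons] at hx ⊢
    rw [height_cons, if_neg (by simp only [Prod.fst_add] at this; omega)]
    exact ih hl' hx

lemma height_nonneg (hnn : ∀ v ∈ pts p l, 0 ≤ v.2) (x : ℤ) : 0 ≤ height p l x := by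
  induction l generalizing p with
  | nil => exact hnn p (self_mem_pts _ _)
  | cons s l ih =>
    rw [height_cons]
    split_ifs
    · exact hnn p (self_mem_pts _ _)
    · exact ih fun v hv => hnn v (by simp [hv])

lemma abs_height_succ_sub_le (hl : ∀ s ∈ l, IsStep s) (x : ℤ) :
    |height p l (x + 1) - height p l x| ≤ 1 := by
  induction l generalizing p with
  | nil => simp [height]
  | cons s l ih =>
    have hl' : ∀ t ∈ l, IsStep t := fun t ht => hl t (List.mem_cons_of_mem _ ht)
    have hs := (hl s List.mem_cons_self).fst_snd
    rw [height_cons, height_cons]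
    by_cases h₁ : x + 1 < p.1 + s.1
    · rw [if_pos h₁, if_pos (by omega)]
      simp
    · rw [if_neg h₁]
      by_cases h₀ : x < p.1 + s.1
      · rw [if_pos h₀, height_of_le hl' (by simp only [Prod.fst_add]; omega), Prod.snd_add]
        rw [abs_le]
        omega
      · rw [if_neg h₀]
        exact ih hl'

/-- Off the parity class of the vertices, a column is the middle of a level step or lies outside
the path. -/
lemma height_succ_of_parity_ne (hl : ∀ s ∈ l, IsStep s) {x : ℤ}
    (hx : (x + height p l x) % 2 ≠ (p.1 + p.2) % 2) : height p l (x + 1) = height p l x := by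
  induction l generalizing p with
  | nil => rfl
  | cons s l ih =>
    have hl' : ∀ t ∈ l, IsStep t := fun t ht => hl t (List.mem_cons_of_mem _ ht)
    have hs := (hl s List.mem_cons_self).fst_snd
    rw [height_cons, height_cons] at *
    by_cases h₀ : x < p.1 + s.1
    · rw [if_pos h₀] at hx ⊢
      by_cases h₁ : x + 1 < p.1 + s.1
      · rw [if_pos h₁]
      · rw [if_neg h₁, height_of_le hl' (by simp only [Prod.fst_add]; omega), Prod.snd_add]
        omega
    · rw [if_neg h₀] at hx ⊢
      rw [if_neg (by omega)]
      exact ih hl' (by simp only [Prod.fst_add, Prod.snd_add]; omega)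

lemma mem_pts_of_parity (hl : ∀ s ∈ l, IsStep s) {x : ℤ} (hx₁ : p.1 ≤ x)
    (hx₂ : x ≤ (endpt p l).1) (hx : (x + height p l x) % 2 = (p.1 + p.2) % 2) :
    (x, height p l x) ∈ pts p l := by
  induction l generalizing p with
  | nil =>
    obtain rfl : x = p.1 := le_antisymm hx₂ hx₁
    simp only [pts_nil, List.mem_singleton]
    rfl
  | cons s l ih =>
    have hl' : ∀ t ∈ l, IsStep t := fun t ht => hl t (List.mem_cons_of_mem _ ht)
    have hs := (hl s List.mem_cons_self).fst_snd
    rw [height_cons] at *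
    rw [pts_cons, List.mem_cons]
    by_cases h₀ : x < p.1 + s.1
    · rw [if_pos h₀] at hx ⊢
      exact Or.inl (Prod.ext (by dsimp only; omega) rfl)
    · rw [if_neg h₀] at hx ⊢
      exact Or.inr (ih hl' (by simp only [Prod.fst_add]; omega) hx₂
        (by simp only [Prod.fst_add, Prod.snd_add]; omega))

/-- A height difference of one puts one of the two paths in the middle of a level step, where
its height does not change. -/
lemma height_succ_le_of_lt {q : Pt} {m : List Pt} (hl : ∀ s ∈ l, IsStep s)
    (hm : ∀ s ∈ m, IsStep s) (hpq : (p.1 + p.2) % 2 = (q.1 + q.2) % 2) {x : ℤ}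
    (hx : height p l x < height q m x) : height p l (x + 1) ≤ height q m (x + 1) := by
  have hl₁ := abs_le.mp (abs_height_succ_sub_le (p := p) hl x)
  have hm₁ := abs_le.mp (abs_height_succ_sub_le (p := q) hm x)
  have hl₂ := fun h => height_succ_of_parity_ne (p := p) hl (x := x) h
  have hm₂ := fun h => height_succ_of_parity_ne (p := q) hm (x := x) h
  omega

end Height

theorem exists_mem_pts_of_interleaved {a b c d : ℤ} {L M : List Pt}
    (hL : IsLargePath (a, 0) (b, 0) L) (hM : IsLargePath (c, 0) (d, 0) M)
    (hac : a % 2 = c % 2) (hca : c ≤ a) (had : a ≤ d) (hdb : d ≤ b) :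
    ∃ v ∈ pts (a, 0) L, v ∈ pts (c, 0) M := by
  obtain ⟨hLs, hLnn, hLe⟩ := hL
  obtain ⟨hMs, hMnn, hMe⟩ := hM
  have hfa : height (a, 0) L a = 0 := height_of_le hLs le_rfl
  have hgd : height (c, 0) M d = 0 := by
    simpa [hMe] using height_of_endpt_le (p := (c, 0)) hMs (x := d) (by simp [hMe])
  have hd : d % 2 = c % 2 := by
    simpa [hMe] using parity_of_mem_pts hMs (endpt_mem_pts (c, 0) M)
  have hvert : ∀ y, a ≤ y → y ≤ d → (y + height (a, 0) L y) % 2 = a % 2 →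
      height (a, 0) L y = height (c, 0) M y → ∃ v ∈ pts (a, 0) L, v ∈ pts (c, 0) M := by
    intro y hay hyd hpar heq
    refine ⟨_, mem_pts_of_parity hLs hay (by rw [hLe]; omega) (by simpa using hpar), ?_⟩
    rw [heq]
    exact mem_pts_of_parity hMs (by dsimp only; omega) (by simpa [hMe] using hyd)
      (by simp only [add_zero]; omega)
  obtain ⟨x, hax, hxd, hx⟩ := Int.exists_eq_zero_of_pos_imp_succ_nonneg
    (fun x => height (c, 0) M x - height (a, 0) L x) had
    (by have := height_nonneg hMnn a; omega)
    (by have := height_nonneg hLnn d; omega)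
    (fun x hx => sub_nonneg.mpr (height_succ_le_of_lt hLs hMs (by simpa using hac) (by omega)))
  by_cases hpar : (x + height (a, 0) L x) % 2 = a % 2
  · exact hvert x hax hxd hpar (by omega)
  · -- `x` is the middle column of a level step shared by both paths
    have hf := height_succ_of_parity_ne (p := (a, 0)) hLs (x := x) (by simpa using hpar)
    have hg := height_succ_of_parity_ne (p := (c, 0)) hMs (x := x) (by simp only [add_zero]; omega)
    have hxa : x ≠ a := by rintro rfl; omega
    have hxd' : x ≠ d := by rintro rfl; omega
    exact hvert (x + 1) (by omega) (by omega) (by omega) (by omega)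

section Counting

lemma length_le_of_isLargePath {p q : Pt} {l : List Pt} (h : IsLargePath p q l) :
    l.length ≤ (q.1 - p.1).toNat := by
  have := fst_add_length_le_endpt (p := p) h.1
  rw [h.2.2] at this
  omega

instance (p q : Pt) : Finite {l : List Pt // IsLargePath p q l} := by
  let S : Set Pt := {(1, 1), (1, -1), (2, 0)}
  have hsub : {l | IsLargePath p q l} ⊆
      List.map Subtype.val '' {m : List S | m.length ≤ (q.1 - p.1).toNat} := by
    intro l hl
    have hS : ∀ s ∈ l, s ∈ S := hl.1
    lift l to List S using hS
    exact ⟨l, by simpa using length_le_of_isLargePath hl, rfl⟩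
  exact (((List.finite_length_le S _).image _).subset hsub).to_subtype

lemma isLargePath_add_iff (d : ℤ) {p q : Pt} {l : List Pt} :
    IsLargePath ((d, 0) + p) ((d, 0) + q) l ↔ IsLargePath p q l := by
  simp only [IsLargePath, pts_add, endpt_add, List.mem_map, add_right_inj]
  constructor
  · rintro ⟨h₁, h₂, h₃⟩
    exact ⟨h₁, fun v hv => by simpa using h₂ _ ⟨v, hv, rfl⟩, h₃⟩
  · rintro ⟨h₁, h₂, h₃⟩
    refine ⟨h₁, ?_, h₃⟩
    rintro _ ⟨v, hv, rfl⟩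
    simpa using h₂ v hv

lemma card_isLargePath (x : ℤ) (k : ℕ) :
    Nat.card {l : List Pt // IsLargePath (x, 0) (x + 2 * k, 0) l} = schR k := by
  refine Nat.card_congr (Equiv.subtypeEquivRight fun l => ?_)
  simpa using isLargePath_add_iff x (p := (0, 0)) (q := (2 * k, 0)) (l := l)

end Counting

lemma IsLargePath.splice {p₁ q₁ p₂ q₂ : Pt} {l₁ l₂ : List Pt} {t₁ t₂ : ℕ}
    (h₁ : IsLargePath p₁ q₁ l₁) (h₂ : IsLargePath p₂ q₂ l₂) (ht₂ : t₂ ≤ l₂.length)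
    (hv : endpt p₁ (l₁.take t₁) = endpt p₂ (l₂.take t₂)) :
    IsLargePath p₁ q₂ (l₁.take t₁ ++ l₂.drop t₂) := by
  refine ⟨fun s hs => ?_, fun w hw => ?_, ?_⟩
  · rcases List.mem_append.mp hs with h | h
    exacts [h₁.1 s (List.take_subset _ _ h), h₂.1 s (List.drop_subset _ _ h)]
  · rw [pts_splice l₁ l₂ ht₂ hv, List.mem_append] at hw
    rcases hw with h | h
    exacts [h₁.2.1 w (List.take_subset _ _ h), h₂.2.1 w (List.drop_subset _ _ h)]
  · rw [endpt_append, hv, ← endpt_append, List.take_append_drop, h₂.2.2]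

section Involution

variable {n : ℕ}

def vertices (A : Fin n → Pt) (π : Fin n → List Pt) (k : Fin n) : List Pt := pts (A k) (π k)

def IsIntersecting (A : Fin n → Pt) (π : Fin n → List Pt) : Prop :=
  ∃ k, ∃ v ∈ vertices A π k, ∃ l ≠ k, v ∈ vertices A π l

variable {A : Fin n → Pt} {π : Fin n → List Pt}

open scoped Classical in
noncomputable def meetSet (A : Fin n → Pt) (π : Fin n → List Pt) : Finset (Fin n) :=
  {k | ∃ v ∈ vertices A π k, ∃ l ≠ k, v ∈ vertices A π l}

lemma mem_meetSet {k : Fin n} :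
    k ∈ meetSet A π ↔ ∃ v ∈ vertices A π k, ∃ l ≠ k, v ∈ vertices A π l := by
  simp [meetSet]

noncomputable def meetIdx (h : IsIntersecting A π) : Fin n :=
  (meetSet A π).min' (by obtain ⟨k, hk⟩ := h; exact ⟨k, mem_meetSet.mpr hk⟩)

lemma exists_meetTime (h : IsIntersecting A π) :
    ∃ t : ℕ, ∃ v : Pt, (vertices A π (meetIdx h))[t]? = some v ∧
      ∃ l ≠ meetIdx h, v ∈ vertices A π l := by
  obtain ⟨v, hv, hvl⟩ := mem_meetSet.mp (Finset.min'_mem _ _ : meetIdx h ∈ meetSet A π)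
  obtain ⟨t, ht, rfl⟩ := List.getElem_of_mem hv
  exact ⟨t, _, List.getElem?_eq_getElem ht, hvl⟩

open scoped Classical in
noncomputable def meetTime (h : IsIntersecting A π) : ℕ := Nat.find (exists_meetTime h)

lemma meetTime_lt_length (h : IsIntersecting A π) :
    meetTime h < (vertices A π (meetIdx h)).length := by
  obtain ⟨v, hv, -⟩ := Nat.find_spec (exists_meetTime h)
  exact (List.getElem?_eq_some_iff.mp hv).1

noncomputable def meetPoint (h : IsIntersecting A π) : Pt :=
  (vertices A π (meetIdx h))[meetTime h]'(meetTime_lt_length h)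

lemma getElem?_meetTime (h : IsIntersecting A π) :
    (vertices A π (meetIdx h))[meetTime h]? = some (meetPoint h) :=
  List.getElem?_eq_getElem _

lemma exists_ne_meetPoint_mem (h : IsIntersecting A π) :
    ∃ l ≠ meetIdx h, meetPoint h ∈ vertices A π l := by
  obtain ⟨v, hv, hvl⟩ := Nat.find_spec (exists_meetTime h)
  rwa [← Option.some_inj.mp ((getElem?_meetTime h).symm.trans hv)] at hvl

open scoped Classical in
noncomputable def partner (h : IsIntersecting A π) : Fin n :=
  ({l | l ≠ meetIdx h ∧ meetPoint h ∈ vertices A π l} : Finset (Fin n)).min'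
    (by obtain ⟨l, hl⟩ := exists_ne_meetPoint_mem h; exact ⟨l, by simpa using hl⟩)

open scoped Classical in
lemma partner_spec (h : IsIntersecting A π) :
    partner h ≠ meetIdx h ∧ meetPoint h ∈ vertices A π (partner h) := by
  have : partner h ∈ ({l | l ≠ meetIdx h ∧ meetPoint h ∈ vertices A π l} : Finset (Fin n)) :=
    Finset.min'_mem _ _
  simpa using this

noncomputable def partnerTime (h : IsIntersecting A π) : ℕ :=
  (vertices A π (partner h)).idxOf (meetPoint h)

lemma partnerTime_lt_length (h : IsIntersecting A π) :
    partnerTime h < (vertices A π (partner h)).length :=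
  List.idxOf_lt_length_iff.mpr (partner_spec h).2

lemma getElem_partnerTime (h : IsIntersecting A π) :
    (vertices A π (partner h))[partnerTime h]'(partnerTime_lt_length h) = meetPoint h :=
  List.getElem_idxOf _

noncomputable def swapTails (h : IsIntersecting A π) : Fin n → List Pt :=
  Function.update
    (Function.update π (meetIdx h)
      ((π (meetIdx h)).take (meetTime h) ++ (π (partner h)).drop (partnerTime h)))
    (partner h) ((π (partner h)).take (partnerTime h) ++ (π (meetIdx h)).drop (meetTime h))

lemma swapTails_meetIdx (h : IsIntersecting A π) :
    swapTails h (meetIdx h) =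
      (π (meetIdx h)).take (meetTime h) ++ (π (partner h)).drop (partnerTime h) := by
  rw [swapTails, Function.update_of_ne (partner_spec h).1.symm, Function.update_self]

lemma swapTails_partner (h : IsIntersecting A π) :
    swapTails h (partner h) =
      (π (partner h)).take (partnerTime h) ++ (π (meetIdx h)).drop (meetTime h) := by
  rw [swapTails, Function.update_self]

lemma swapTails_of_ne (h : IsIntersecting A π) {k : Fin n} (hi : k ≠ meetIdx h)
    (hj : k ≠ partner h) : swapTails h k = π k := by
  rw [swapTails, Function.update_of_ne hj, Function.update_of_ne hi]

lemma meetTime_le_length (h : IsIntersecting A π) : meetTime h ≤ (π (meetIdx h)).length := by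
  have := meetTime_lt_length h
  rw [vertices, length_pts] at this
  omega

lemma partnerTime_le_length (h : IsIntersecting A π) :
    partnerTime h ≤ (π (partner h)).length := by
  have := partnerTime_lt_length h
  rw [vertices, length_pts] at this
  omega

lemma endpt_take_meetTime (h : IsIntersecting A π) :
    endpt (A (meetIdx h)) ((π (meetIdx h)).take (meetTime h)) = meetPoint h :=
  (getElem_pts _ _ (meetTime_lt_length h)).symm

lemma endpt_take_partnerTime (h : IsIntersecting A π) :
    endpt (A (partner h)) ((π (partner h)).take (partnerTime h)) = meetPoint h :=
  (getElem_pts _ _ (partnerTime_lt_length h)).symm.trans (getElem_partnerTime h)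

lemma vertices_swapTails_meetIdx (h : IsIntersecting A π) :
    vertices A (swapTails h) (meetIdx h) =
      (vertices A π (meetIdx h)).take (meetTime h + 1) ++
        (vertices A π (partner h)).drop (partnerTime h + 1) := by
  rw [vertices, swapTails_meetIdx]
  exact pts_splice _ _ (partnerTime_le_length h)
    ((endpt_take_meetTime h).trans (endpt_take_partnerTime h).symm)

lemma vertices_swapTails_partner (h : IsIntersecting A π) :
    vertices A (swapTails h) (partner h) =
      (vertices A π (partner h)).take (partnerTime h + 1) ++
        (vertices A π (meetIdx h)).drop (meetTime h + 1) := by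
  rw [vertices, swapTails_partner]
  exact pts_splice _ _ (meetTime_le_length h)
    ((endpt_take_partnerTime h).trans (endpt_take_meetTime h).symm)

lemma vertices_swapTails_of_ne (h : IsIntersecting A π) {k : Fin n} (hi : k ≠ meetIdx h)
    (hj : k ≠ partner h) : vertices A (swapTails h) k = vertices A π k := by
  rw [vertices, vertices, swapTails_of_ne h hi hj]

lemma getElem?_vertices_swapTails_meetIdx (h : IsIntersecting A π) {t : ℕ}
    (ht : t ≤ meetTime h) :
    (vertices A (swapTails h) (meetIdx h))[t]? = (vertices A π (meetIdx h))[t]? := by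
  rw [vertices_swapTails_meetIdx]
  exact List.getElem?_take_append (by omega) (meetTime_lt_length h)

lemma getElem?_vertices_swapTails_partner (h : IsIntersecting A π) :
    (vertices A (swapTails h) (partner h))[partnerTime h]? = some (meetPoint h) := by
  rw [vertices_swapTails_partner, List.getElem?_take_append (by omega) (partnerTime_lt_length h),
    List.getElem?_eq_getElem (partnerTime_lt_length h), getElem_partnerTime]

lemma meetPoint_mem_vertices_meetIdx (h : IsIntersecting A π) :
    meetPoint h ∈ vertices A π (meetIdx h) :=
  List.mem_of_getElem? (getElem?_meetTime h)

lemma meetPoint_mem_swapTails_meetIdx (h : IsIntersecting A π) :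
    meetPoint h ∈ vertices A (swapTails h) (meetIdx h) :=
  List.mem_of_getElem? ((getElem?_vertices_swapTails_meetIdx h le_rfl).trans (getElem?_meetTime h))

lemma meetPoint_mem_swapTails_partner (h : IsIntersecting A π) :
    meetPoint h ∈ vertices A (swapTails h) (partner h) :=
  List.mem_of_getElem? (getElem?_vertices_swapTails_partner h)

lemma isIntersecting_swapTails (h : IsIntersecting A π) : IsIntersecting A (swapTails h) :=
  ⟨meetIdx h, meetPoint h, meetPoint_mem_swapTails_meetIdx h, partner h, (partner_spec h).1,
    meetPoint_mem_swapTails_partner h⟩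

lemma isStep_swapTails (hπ : ∀ k, ∀ s ∈ π k, IsStep s) (h : IsIntersecting A π) (k : Fin n) :
    ∀ s ∈ swapTails h k, IsStep s := by
  intro s hs
  by_cases hi : k = meetIdx h
  · rw [hi, swapTails_meetIdx, List.mem_append] at hs
    exact hs.elim (fun hs => hπ _ s (List.take_subset _ _ hs))
      (fun hs => hπ _ s (List.drop_subset _ _ hs))
  by_cases hj : k = partner h
  · rw [hj, swapTails_partner, List.mem_append] at hs
    exact hs.elim (fun hs => hπ _ s (List.take_subset _ _ hs))
      (fun hs => hπ _ s (List.drop_subset _ _ hs))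
  exact hπ k s (swapTails_of_ne h hi hj ▸ hs)

lemma mem_vertices_swapTails_iff (h : IsIntersecting A π) {w : Pt} :
    w ∈ vertices A (swapTails h) (meetIdx h) ∨ w ∈ vertices A (swapTails h) (partner h) ↔
      w ∈ vertices A π (meetIdx h) ∨ w ∈ vertices A π (partner h) := by
  rw [vertices_swapTails_meetIdx, vertices_swapTails_partner]
  conv_rhs => rw [← List.take_append_drop (meetTime h + 1) (vertices A π (meetIdx h)),
    ← List.take_append_drop (partnerTime h + 1) (vertices A π (partner h))]
  simp only [List.mem_append]
  tauto

lemma exists_ne_mem_vertices_swapTails_iff (h : IsIntersecting A π) {k : Fin n}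
    (hi : k ≠ meetIdx h) (hj : k ≠ partner h) {w : Pt} :
    (∃ l ≠ k, w ∈ vertices A (swapTails h) l) ↔ ∃ l ≠ k, w ∈ vertices A π l := by
  have hij : ∀ {ρ : Fin n → List Pt},
      w ∈ vertices A ρ (meetIdx h) ∨ w ∈ vertices A ρ (partner h) → ∃ l ≠ k, w ∈ vertices A ρ l :=
    fun hw => hw.elim (fun hw => ⟨_, hi.symm, hw⟩) (fun hw => ⟨_, hj.symm, hw⟩)
  constructor <;> rintro ⟨l, hlk, hl⟩
  · by_cases hl' : l = meetIdx h ∨ l = partner h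
    · exact hij ((mem_vertices_swapTails_iff h).mp (by rcases hl' with rfl | rfl <;> simp [hl]))
    · push Not at hl'
      exact ⟨l, hlk, vertices_swapTails_of_ne h hl'.1 hl'.2 ▸ hl⟩
  · by_cases hl' : l = meetIdx h ∨ l = partner h
    · exact hij ((mem_vertices_swapTails_iff h).mpr (by rcases hl' with rfl | rfl <;> simp [hl]))
    · push Not at hl'
      exact ⟨l, hlk, (vertices_swapTails_of_ne h hl'.1 hl'.2).symm ▸ hl⟩

lemma meetSet_swapTails (h : IsIntersecting A π) : meetSet A (swapTails h) = meetSet A π := by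
  ext k
  rw [mem_meetSet, mem_meetSet]
  have hji := (partner_spec h).1
  by_cases hk : k = meetIdx h ∨ k = partner h
  · rcases hk with rfl | rfl
    · exact iff_of_true
        ⟨_, meetPoint_mem_swapTails_meetIdx h, _, hji, meetPoint_mem_swapTails_partner h⟩
        ⟨_, meetPoint_mem_vertices_meetIdx h, _, hji, (partner_spec h).2⟩
    · exact iff_of_true
        ⟨_, meetPoint_mem_swapTails_partner h, _, hji.symm, meetPoint_mem_swapTails_meetIdx h⟩
        ⟨_, (partner_spec h).2, _, hji.symm, meetPoint_mem_vertices_meetIdx h⟩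
  · push Not at hk
    rw [vertices_swapTails_of_ne h hk.1 hk.2]
    exact exists_congr fun v =>
      and_congr_right fun _ => exists_ne_mem_vertices_swapTails_iff h hk.1 hk.2

variable (h : IsIntersecting A π) (h' : IsIntersecting A (swapTails h))

lemma meetIdx_swapTails : meetIdx h' = meetIdx h := by
  unfold meetIdx
  congr 1
  exact meetSet_swapTails h

lemma meetTime_swapTails (hπ : ∀ k, ∀ s ∈ π k, IsStep s) : meetTime h' = meetTime h := by
  rw [meetTime, Nat.find_eq_iff]
  simp only [meetIdx_swapTails h h']
  refine ⟨⟨meetPoint h, (getElem?_vertices_swapTails_meetIdx h le_rfl).trans (getElem?_meetTime h),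
    partner h, (partner_spec h).1, meetPoint_mem_swapTails_partner h⟩, ?_⟩
  rintro t ht ⟨w, hw, l, hl, hwl⟩
  rw [getElem?_vertices_swapTails_meetIdx h ht.le] at hw
  have hmin := Nat.find_min (exists_meetTime h) ht
  by_cases hlj : l = partner h
  · subst hlj
    rw [vertices_swapTails_partner, List.mem_append] at hwl
    rcases hwl with hwl | hwl
    · exact hmin ⟨w, hw, partner h, hl, List.take_subset _ _ hwl⟩
    · -- `w` occurs on the path `meetIdx h` both before and after `meetPoint h`
      have hw' : w ∈ (vertices A π (meetIdx h)).take (meetTime h + 1) :=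
        List.mem_of_getElem? (by
          rw [List.getElem?_take, if_pos (show t < meetTime h + 1 by omega), hw])
      exact List.disjoint_take_drop (nodup_pts (hπ _)) le_rfl hw' hwl
  · exact hmin ⟨w, hw, l, hl, vertices_swapTails_of_ne h hl hlj ▸ hwl⟩

lemma meetPoint_swapTails (hπ : ∀ k, ∀ s ∈ π k, IsStep s) : meetPoint h' = meetPoint h := by
  have := getElem?_meetTime h'
  rw [meetIdx_swapTails h h', meetTime_swapTails h h' hπ,
    getElem?_vertices_swapTails_meetIdx h le_rfl, getElem?_meetTime h] at this
  exact (Option.some_inj.mp this).symm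

lemma partner_swapTails (hπ : ∀ k, ∀ s ∈ π k, IsStep s) : partner h' = partner h := by
  unfold partner
  congr 1
  ext l
  simp only [Finset.mem_filter, Finset.mem_univ, true_and, meetIdx_swapTails h h',
    meetPoint_swapTails h h' hπ]
  refine and_congr_right fun hli => ?_
  by_cases hlj : l = partner h
  · subst hlj
    exact iff_of_true (meetPoint_mem_swapTails_partner h) (partner_spec h).2
  · rw [vertices_swapTails_of_ne h hli hlj]

lemma partnerTime_swapTails (hπ : ∀ k, ∀ s ∈ π k, IsStep s) :
    partnerTime h' = partnerTime h := by
  obtain ⟨hs, hget⟩ := List.getElem?_eq_some_iff.mp (getElem?_vertices_swapTails_partner h)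
  have hnd : (vertices A (swapTails h) (partner h)).Nodup := nodup_pts (isStep_swapTails hπ h _)
  rw [partnerTime, partner_swapTails h h' hπ, meetPoint_swapTails h h' hπ, ← hget,
    hnd.idxOf_getElem]

lemma swapTails_swapTails (hπ : ∀ k, ∀ s ∈ π k, IsStep s) : swapTails h' = π := by
  have hi := meetIdx_swapTails h h'
  have hj := partner_swapTails h h' hπ
  have ht := meetTime_swapTails h h' hπ
  have hs := partnerTime_swapTails h h' hπ
  funext k
  by_cases hki : k = meetIdx h
  · rw [hki, ← hi, swapTails_meetIdx h', hi, hj, ht, hs, swapTails_meetIdx h, swapTails_partner h]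
    exact List.take_append_drop_take_append_drop (meetTime_le_length h) (partnerTime_le_length h)
  by_cases hkj : k = partner h
  · rw [hkj, ← hj, swapTails_partner h', hi, hj, ht, hs, swapTails_meetIdx h, swapTails_partner h]
    exact List.take_append_drop_take_append_drop (partnerTime_le_length h) (meetTime_le_length h)
  rw [swapTails_of_ne h' (hi ▸ hki) (hj ▸ hkj), swapTails_of_ne h hki hkj]

end Involution

section LGV

variable {n : ℕ} {A B : Fin n → Pt}

def PathSystem (A B : Fin n → Pt) (σ : Equiv.Perm (Fin n)) : Type :=
  {π : Fin n → List Pt // ∀ k, IsLargePath (A k) (B (σ k)) (π k)}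

noncomputable instance (σ : Equiv.Perm (Fin n)) : Fintype (PathSystem A B σ) :=
  have : Finite (PathSystem A B σ) := Finite.of_equiv _ Equiv.subtypePiEquivPi.symm
  Fintype.ofFinite _

lemma PathSystem.sigma_ext {c d : Σ σ, PathSystem A B σ} (h₁ : c.1 = d.1) (h₂ : c.2.1 = d.2.1) :
    c = d := by
  obtain ⟨σ, π, hπ⟩ := c
  obtain ⟨τ, ρ, hρ⟩ := d
  obtain rfl : σ = τ := h₁
  obtain rfl : π = ρ := h₂
  rfl

lemma isLargePath_swapTails {σ : Equiv.Perm (Fin n)} {π : Fin n → List Pt}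
    (hπ : ∀ k, IsLargePath (A k) (B (σ k)) (π k)) (h : IsIntersecting A π) (k : Fin n) :
    IsLargePath (A k) (B ((σ * Equiv.swap (meetIdx h) (partner h)) k)) (swapTails h k) := by
  by_cases hi : k = meetIdx h
  · rw [hi, swapTails_meetIdx, Equiv.Perm.mul_apply, Equiv.swap_apply_left]
    exact IsLargePath.splice (hπ _) (hπ _) (partnerTime_le_length h)
      ((endpt_take_meetTime h).trans (endpt_take_partnerTime h).symm)
  by_cases hj : k = partner h
  · rw [hj, swapTails_partner, Equiv.Perm.mul_apply, Equiv.swap_apply_right]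
    exact IsLargePath.splice (hπ _) (hπ _) (meetTime_le_length h)
      ((endpt_take_partnerTime h).trans (endpt_take_meetTime h).symm)
  rw [swapTails_of_ne h hi hj, Equiv.Perm.mul_apply, Equiv.swap_apply_of_ne_of_ne hi hj]
  exact hπ k

open scoped Classical in
/-- The sign-reversing involution of Lindström–Gessel–Viennot. -/
noncomputable def tailSwap : (Σ σ, PathSystem A B σ) → Σ σ, PathSystem A B σ
  | ⟨σ, π, hπ⟩ =>
    if h : IsIntersecting A π then
      ⟨σ * Equiv.swap (meetIdx h) (partner h), swapTails h, isLargePath_swapTails hπ h⟩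
    else ⟨σ, π, hπ⟩

open scoped Classical in
lemma tailSwap_of_isIntersecting {σ : Equiv.Perm (Fin n)} {π : Fin n → List Pt}
    (hπ : ∀ k, IsLargePath (A k) (B (σ k)) (π k)) (h : IsIntersecting A π) :
    tailSwap ⟨σ, π, hπ⟩ =
      ⟨σ * Equiv.swap (meetIdx h) (partner h), swapTails h, isLargePath_swapTails hπ h⟩ :=
  dif_pos h

variable (c : Σ σ, PathSystem A B σ)

lemma isIntersecting_tailSwap (hc : IsIntersecting A c.2.1) :
    IsIntersecting A (tailSwap c).2.1 := by
  obtain ⟨σ, π, hπ⟩ := c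
  rw [tailSwap_of_isIntersecting hπ hc]
  exact isIntersecting_swapTails hc

lemma sign_tailSwap (hc : IsIntersecting A c.2.1) :
    Equiv.Perm.sign (tailSwap c).1 = -Equiv.Perm.sign c.1 := by
  obtain ⟨σ, π, hπ⟩ := c
  rw [tailSwap_of_isIntersecting hπ hc, Equiv.Perm.sign_mul,
    Equiv.Perm.sign_swap (partner_spec hc).1.symm, mul_neg_one]

lemma tailSwap_tailSwap (hc : IsIntersecting A c.2.1) : tailSwap (tailSwap c) = c := by
  obtain ⟨σ, π, hπ⟩ := c
  have hs : ∀ k, ∀ s ∈ π k, IsStep s := fun k => (hπ k).1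
  have hc' := isIntersecting_swapTails hc
  rw [tailSwap_of_isIntersecting hπ hc, tailSwap_of_isIntersecting _ hc']
  refine PathSystem.sigma_ext ?_ (swapTails_swapTails hc hc' hs)
  change _ * _ * _ = σ
  rw [meetIdx_swapTails hc hc', partner_swapTails hc hc' hs, mul_assoc, Equiv.swap_mul_self,
    mul_one]

lemma sum_sign_mul_card_subtype (Q : (Fin n → List Pt) → Prop) [DecidablePred Q] :
    ∑ σ, (Equiv.Perm.sign σ : ℤ) * Nat.card {π : PathSystem A B σ // Q π.1} =
      ∑ c : Σ σ, PathSystem A B σ with Q c.2.1, (Equiv.Perm.sign c.1 : ℤ) := by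
  rw [Finset.sum_filter, Fintype.sum_sigma]
  refine Finset.sum_congr rfl fun σ _ => ?_
  dsimp only
  rw [← Finset.sum_filter, Finset.sum_const, nsmul_eq_mul, mul_comm, Nat.card_eq_fintype_card,
    Fintype.card_subtype]

theorem sum_sign_mul_card_pathSystem (A B : Fin n → Pt) :
    ∑ σ, (Equiv.Perm.sign σ : ℤ) * Nat.card (PathSystem A B σ) =
      ∑ σ, (Equiv.Perm.sign σ : ℤ) * Nat.card {π : PathSystem A B σ // ¬ IsIntersecting A π.1} := by
  classical
  have hcancel : ∑ c : Σ σ, PathSystem A B σ with IsIntersecting A c.2.1,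
      (Equiv.Perm.sign c.1 : ℤ) = 0 := by
    refine Finset.sum_involution (fun c _ => tailSwap c) (fun c hc => ?_) (fun c hc _ => ?_)
      (fun c hc => ?_) (fun c hc => tailSwap_tailSwap c (Finset.mem_filter.mp hc).2)
    · rw [sign_tailSwap c (Finset.mem_filter.mp hc).2, Units.val_neg, add_neg_cancel]
    · intro hfix
      have := sign_tailSwap c (Finset.mem_filter.mp hc).2
      rw [hfix] at this
      exact units_ne_neg_self _ this
    · exact Finset.mem_filter.mpr ⟨Finset.mem_univ _,
        isIntersecting_tailSwap c (Finset.mem_filter.mp hc).2⟩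
  calc ∑ σ, (Equiv.Perm.sign σ : ℤ) * Nat.card (PathSystem A B σ)
      = ∑ c : Σ σ, PathSystem A B σ, (Equiv.Perm.sign c.1 : ℤ) := by
        rw [Fintype.sum_sigma]
        refine Finset.sum_congr rfl fun σ _ => ?_
        dsimp only
        rw [Finset.sum_const, nsmul_eq_mul, mul_comm, Nat.card_eq_fintype_card, Finset.card_univ]
    _ = ∑ c : Σ σ, PathSystem A B σ with ¬ IsIntersecting A c.2.1, (Equiv.Perm.sign c.1 : ℤ) := by
        rw [← Finset.sum_filter_add_sum_filter_not Finset.univ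
          (fun c : Σ σ, PathSystem A B σ => IsIntersecting A c.2.1), hcancel, zero_add]
    _ = _ := (sum_sign_mul_card_subtype fun π => ¬ IsIntersecting A π).symm

end LGV

section Hankel

def source (n : ℕ) (k : Fin n) : Pt := (-(2 * (k : ℤ) + 1), 0)

def sink (n : ℕ) (k : Fin n) : Pt := (2 * (k : ℤ) + 1, 0)

variable {n : ℕ}

lemma card_pathSystem_source_sink (σ : Equiv.Perm (Fin n)) :
    Nat.card (PathSystem (source n) (sink n) σ) = ∏ k, schR (k + σ k + 1) := by
  rw [PathSystem, Nat.card_congr Equiv.subtypePiEquivPi, Nat.card_pi]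
  refine Finset.prod_congr rfl fun k _ => ?_
  have hsink : sink n (σ k) = (-(2 * (k : ℤ) + 1) + 2 * ((k + σ k + 1 : ℕ) : ℤ), 0) := by
    simp only [sink, Prod.mk.injEq, and_true]
    push_cast
    ring
  rw [hsink]
  exact card_isLargePath _ _

lemma eq_one_of_not_isIntersecting {σ : Equiv.Perm (Fin n)} (π : PathSystem (source n) (sink n) σ)
    (h : ¬ IsIntersecting (source n) π.1) : σ = 1 := by
  have hmono : StrictMono σ := by
    intro i j hij
    by_contra hle
    have hij' : (i : ℕ) < j := hij
    have hσ : (σ j : ℕ) < σ i :=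
      lt_of_le_of_ne (not_lt.mp hle) (Fin.val_ne_of_ne (σ.injective.ne hij.ne'))
    obtain ⟨v, hvi, hvj⟩ := exists_mem_pts_of_interleaved (π.2 i) (π.2 j)
      (by omega) (by omega) (by omega) (by omega)
    exact h ⟨i, v, hvi, j, hij.ne', hvj⟩
  exact Equiv.ext fun k => congrFun hmono.eq_id k

def nonIntersectingEquivPiSet :
    {π : PathSystem (source n) (sink n) 1 // ¬ IsIntersecting (source n) π.1} ≃ PiSet n where
  toFun π := ⟨π.1.1, π.1.2, fun i j hij v hvi hvj => π.2 ⟨i, v, hvi, j, hij.symm, hvj⟩⟩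
  invFun π := ⟨⟨π.1, π.2.1⟩, fun ⟨i, v, hvi, j, hji, hvj⟩ => π.2.2 i j hji.symm v hvi hvj⟩

lemma sum_sign_mul_card_nonIntersecting :
    ∑ σ, (Equiv.Perm.sign σ : ℤ) *
        Nat.card {π : PathSystem (source n) (sink n) σ // ¬ IsIntersecting (source n) π.1} =
      Nat.card (PiSet n) := by
  rw [Finset.sum_eq_single 1 (fun σ _ hσ => ?_) (by simp), Equiv.Perm.sign_one, Units.val_one,
    one_mul, Nat.card_congr nonIntersectingEquivPiSet]
  have : IsEmpty {π : PathSystem (source n) (sink n) σ // ¬ IsIntersecting (source n) π.1} :=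
    ⟨fun π => hσ (eq_one_of_not_isIntersecting π.1 π.2)⟩
  simp

lemma det_hankel {R : Type*} [CommRing R] (a : ℕ → R) :
    (Matrix.of fun i j : Fin n => a (i + j + 1)).det =
      ∑ σ : Equiv.Perm (Fin n), ((Equiv.Perm.sign σ : ℤ) : R) * ∏ i, a (i + σ i + 1) := by
  rw [Matrix.det_apply']
  refine Finset.sum_congr rfl fun σ _ => congrArg _ (Finset.prod_congr rfl fun i _ => ?_)
  rw [Matrix.of_apply, Nat.add_comm (σ i : ℕ)]

end Hankel

end LargeSchroder

/-- Lindström–Gessel–Viennot for Schröder Hankel matrices: for any real sequence the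
determinant of `[a_{i+j-1}]` is the signed sum over permutations of products of entries,
and specialized to the large Schröder numbers (where `r_{i+j-1}` counts large Schröder
paths from `A_i = (-2i+1,0)` to `B_j = (2j-1,0)`) it equals `|Π_n|`. -/
theorem lgv_hankel (n : ℕ) :
    (∀ a : ℕ → ℝ,
        (Matrix.of fun i j : Fin n => a ((i : ℕ) + (j : ℕ) + 1)).det =
          ∑ σ : Equiv.Perm (Fin n),
            ((Equiv.Perm.sign σ : ℤ) : ℝ) * ∏ i : Fin n, a ((i : ℕ) + (σ i : ℕ) + 1)) ∧
      (Matrix.of fun i j : Fin n => (schR ((i : ℕ) + (j : ℕ) + 1) : ℝ)).det =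
        (Nat.card ↥(PiSet n) : ℝ) := by
  refine ⟨LargeSchroder.det_hankel, ?_⟩
  have hcount : ∑ σ : Equiv.Perm (Fin n),
      (Equiv.Perm.sign σ : ℤ) * ∏ i, (schR (i + σ i + 1) : ℤ) = Nat.card (PiSet n) := by
    simp only [← Nat.cast_prod, ← LargeSchroder.card_pathSystem_source_sink]
    rw [LargeSchroder.sum_sign_mul_card_pathSystem,
      LargeSchroder.sum_sign_mul_card_nonIntersecting]
  rw [LargeSchroder.det_hankel fun k => (schR k : ℝ)]
  exact_mod_cast hcount
end
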